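/- Let R = {(t, 0) : t ≥ 0} ⊆ ℝ². If f is any simple tropical polynomial in two variables whose corner locus Z(f) contains R, then Z(f) contains the entire horizontal line {(t, 0) : t ∈ ℝ}. Consequently, there is no finite family of simple tropical polynomials in two variables whose common corner locus equals R. -/

import Mathlib

/-- A tropical polynomial in `n` variables: a finite nonempty set of exponent
vectors in `ℕⁿ` together with real coefficients. -/
structure TropPoly (n : ℕ) where
  supp : Finset (Fin n → ℕ)
  supp_nonempty : supp.Nonempty
  coeff : (Fin n → ℕ) → ℝ

namespace TropPoly

variable {n : ℕ}

/-- The value at `u` of the monomial of exponent `ω`. -/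
def mono (f : TropPoly n) (ω : Fin n → ℕ) (u : Fin n → ℝ) : ℝ :=
  (∑ i, (ω i : ℝ) * u i) + f.coeff ω

/-- The piecewise-linear convex function defined by a tropical polynomial:
`f(u) = max_{ω ∈ Ω} (⟨ω, u⟩ + A(ω))`. -/
def eval (f : TropPoly n) (u : Fin n → ℝ) : ℝ :=
  f.supp.sup' f.supp_nonempty (fun ω => f.mono ω u)

/-- The corner locus of a tropical polynomial: the set of points where the
maximum is attained by at least two distinct exponent vectors. -/
def Z (f : TropPoly n) : Set (Fin n → ℝ) :=
  {u | ∃ ω ∈ f.supp, ∃ τ ∈ f.supp, ω ≠ τ ∧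
    f.mono ω u = f.eval u ∧ f.mono τ u = f.eval u}

/-- A tropical polynomial is simple if every exponent vector has at most one
nonzero coordinate (i.e., all monomials are univariate or constant). -/
def Simple (f : TropPoly n) : Prop :=
  ∀ ω ∈ f.supp, ∀ i j : Fin n, ω i ≠ 0 → ω j ≠ 0 → i = j

end TropPoly

/-!
Along the line `u₁ = 0` every monomial is an affine function `t ↦ ω₀ t + A(ω)` of nonnegative
slope. The integer points `(k, 0)` of the ray lie in `Z(f)`, so by pigeonhole one pair `ω ≠ τ`
attains the maximum at two of them; hence `ω₀ = τ₀`, and simplicity forces `ω₀ = τ₀ = 0`.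
Both monomials are then constant on the line, and since `f` is nondecreasing along it they
still attain the maximum at every point to the left of the ray.
-/

namespace TropPoly

section General

variable {n : ℕ} (f : TropPoly n)

theorem mono_le_eval {ω : Fin n → ℕ} (hω : ω ∈ f.supp) (u : Fin n → ℝ) :
    f.mono ω u ≤ f.eval u :=
  Finset.le_sup' (fun τ => f.mono τ u) hω

theorem exists_pair_mono_eq_eval_of_forall_mem_Z {ι : Type*} [Infinite ι] {p : ι → Fin n → ℝ}
    (hp : ∀ k, p k ∈ f.Z) :
    ∃ a b, a ≠ b ∧ ∃ ω ∈ f.supp, ∃ τ ∈ f.supp, ω ≠ τ ∧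
      (f.mono ω (p a) = f.eval (p a) ∧ f.mono τ (p a) = f.eval (p a)) ∧
      (f.mono ω (p b) = f.eval (p b) ∧ f.mono τ (p b) = f.eval (p b)) := by
  choose ω hω τ hτ hne hωmax hτmax using hp
  obtain ⟨a, b, hab, hpair⟩ := Finite.exists_ne_map_eq_of_infinite
    fun k => ((⟨ω k, hω k⟩, ⟨τ k, hτ k⟩) : f.supp × f.supp)
  simp only [Prod.mk.injEq, Subtype.mk.injEq] at hpair
  obtain ⟨hωab, hτab⟩ := hpair
  exact ⟨a, b, hab, ω a, hω a, τ a, hτ a, hne a, ⟨hωmax a, hτmax a⟩,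
    ⟨hωab ▸ hωmax b, hτab ▸ hτmax b⟩⟩

end General

section Line

variable (f : TropPoly 2)

theorem mono_of_snd_eq_zero (ω : Fin 2 → ℕ) {u : Fin 2 → ℝ} (hu : u 1 = 0) :
    f.mono ω u = ω 0 * u 0 + f.coeff ω := by
  simp [mono, Fin.sum_univ_two, hu]

theorem eval_le_eval_of_snd_eq_zero {u v : Fin 2 → ℝ} (hu : u 1 = 0) (hv : v 1 = 0)
    (huv : u 0 ≤ v 0) : f.eval u ≤ f.eval v := by
  refine Finset.sup'_le _ _ fun ω hω => le_trans ?_ (f.mono_le_eval hω v)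
  rw [f.mono_of_snd_eq_zero ω hu, f.mono_of_snd_eq_zero ω hv]
  gcongr

theorem fst_eq_of_mono_eq_mono {ω τ : Fin 2 → ℕ} {u v : Fin 2 → ℝ} (hu : u 1 = 0)
    (hv : v 1 = 0) (huv : u 0 ≠ v 0) (hωτu : f.mono ω u = f.mono τ u)
    (hωτv : f.mono ω v = f.mono τ v) : ω 0 = τ 0 := by
  rw [f.mono_of_snd_eq_zero ω hu, f.mono_of_snd_eq_zero τ hu] at hωτu
  rw [f.mono_of_snd_eq_zero ω hv, f.mono_of_snd_eq_zero τ hv] at hωτv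
  have hslope : ((ω 0 : ℝ) - τ 0) * (u 0 - v 0) = 0 := by linarith
  exact_mod_cast sub_eq_zero.mp ((mul_eq_zero.mp hslope).resolve_right (sub_ne_zero.mpr huv))

theorem mono_eq_eval_of_fst_eq_zero {ω : Fin 2 → ℕ} (hω : ω ∈ f.supp) (hω₀ : ω 0 = 0)
    {u v : Fin 2 → ℝ} (hu : u 1 = 0) (hv : v 1 = 0) (huv : u 0 ≤ v 0)
    (hmax : f.mono ω v = f.eval v) : f.mono ω u = f.eval u := by
  refine le_antisymm (f.mono_le_eval hω u) ?_
  calc f.eval u ≤ f.eval v := f.eval_le_eval_of_snd_eq_zero hu hv huv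
    _ = f.mono ω u := by
      rw [← hmax, f.mono_of_snd_eq_zero ω hu, f.mono_of_snd_eq_zero ω hv, hω₀]
      simp

end Line

theorem Simple.fst_eq_zero_of_fst_eq {f : TropPoly 2} (hf : f.Simple) {ω τ : Fin 2 → ℕ}
    (hω : ω ∈ f.supp) (hτ : τ ∈ f.supp) (hne : ω ≠ τ) (h₀ : ω 0 = τ 0) : ω 0 = 0 := by
  by_contra hω₀
  have hω₁ : ω 1 = 0 := by
    by_contra hω₁
    exact absurd (hf ω hω 0 1 hω₀ hω₁) (by decide)
  have hτ₁ : τ 1 = 0 := by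
    by_contra hτ₁
    exact absurd (hf τ hτ 0 1 (h₀ ▸ hω₀) hτ₁) (by decide)
  exact hne (funext fun i => by fin_cases i <;> simp [h₀, hω₁, hτ₁])

theorem Simple.line_subset_Z_of_ray_subset_Z {f : TropPoly 2} (hf : f.Simple)
    (hray : {u : Fin 2 → ℝ | 0 ≤ u 0 ∧ u 1 = 0} ⊆ f.Z) :
    {u : Fin 2 → ℝ | u 1 = 0} ⊆ f.Z := by
  intro u (hu : u 1 = 0)
  rcases le_or_gt 0 (u 0) with hu₀ | hu₀
  · exact hray ⟨hu₀, hu⟩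
  obtain ⟨a, b, hab, ω, hω, τ, hτ, hne, ⟨hωa, hτa⟩, ⟨hωb, hτb⟩⟩ :=
    f.exists_pair_mono_eq_eval_of_forall_mem_Z (p := fun k : ℕ => ![(k : ℝ), 0])
      fun k => hray ⟨by simp, by simp⟩
  have hline : ∀ k : ℕ, (![(k : ℝ), 0] : Fin 2 → ℝ) 1 = 0 := fun k => by simp
  have h₀ : ω 0 = τ 0 := f.fst_eq_of_mono_eq_mono (hline a) (hline b) (by simpa using hab)
    (hωa.trans hτa.symm) (hωb.trans hτb.symm)
  have hω₀ : ω 0 = 0 := hf.fst_eq_zero_of_fst_eq hω hτ hne h₀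
  have hua : u 0 ≤ (![(a : ℝ), 0] : Fin 2 → ℝ) 0 := by simpa using hu₀.le.trans a.cast_nonneg
  exact ⟨ω, hω, τ, hτ, hne,
    f.mono_eq_eval_of_fst_eq_zero hω hω₀ hu (hline a) hua hωa,
    f.mono_eq_eval_of_fst_eq_zero hτ (h₀ ▸ hω₀) hu (hline a) hua hτa⟩

end TropPoly

/-- If the corner locus of a simple tropical polynomial in two variables contains
the horizontal ray `{(t,0) : t ≥ 0}`, then it contains the whole horizontal line;
consequently, no finite family of simple tropical polynomials has the ray as its
common corner locus. -/
theorem TropPoly.ray_not_simple :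
    (∀ f : TropPoly 2, f.Simple →
      {u : Fin 2 → ℝ | 0 ≤ u 0 ∧ u 1 = 0} ⊆ f.Z →
      {u : Fin 2 → ℝ | u 1 = 0} ⊆ f.Z) ∧
    ¬ ∃ (s : ℕ) (f : Fin s → TropPoly 2), (∀ i, (f i).Simple) ∧
        (⋂ i, (f i).Z) = {u : Fin 2 → ℝ | 0 ≤ u 0 ∧ u 1 = 0} := by
  refine ⟨fun f hf => hf.line_subset_Z_of_ray_subset_Z, ?_⟩
  rintro ⟨s, f, hf, hZ⟩
  have hmem : ![(-1 : ℝ), 0] ∈ ⋂ i, (f i).Z := Set.mem_iInter.mpr fun i =>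
    (hf i).line_subset_Z_of_ray_subset_Z (hZ ▸ Set.iInter_subset _ i) (by simp)
  rw [hZ] at hmem
  norm_num at hmem
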